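/- arXiv:2206.11198 — 2 statements merged into one kernel-verified Lean document; each statement's English description precedes it below -/
import Mathlib

section
/- For every t ≥ 0, E[min(p_t, 1 − p_t)] ≤ (1/2)·(1 − s)^t. -/
open MeasureTheory ProbabilityTheory Finset

/-- The neutral-bit frequency process of the general univariate EDA with sample
size `lam` and update weights `γ 0, γ 1, …, γ lam`.  Conditionally on `F t`, the
samples `x t 1, …, x t lam` are i.i.d. Bernoulli with parameter `p t` (encoded
via all conditional mixed moments), and
`p (t+1) = γ 0 * p t + ∑ i ∈ [1..lam], γ i * x t i`. -/
structure NeutralBitEDA {Ω : Type*} [MeasurableSpace Ω] (μ : Measure Ω)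
    (lam : ℕ) (γ : ℕ → ℝ) where
  F : Filtration ℕ (inferInstance : MeasurableSpace Ω)
  p : ℕ → Ω → ℝ
  x : ℕ → ℕ → Ω → ℝ
  adapted : Adapted F p
  integrable : ∀ t, Integrable (p t) μ
  meas_x : ∀ t i, i ∈ Finset.Icc 1 lam → StronglyMeasurable[F (t + 1)] (x t i)
  p_zero : ∀ᵐ ω ∂μ, p 0 ω = 1 / 2
  p_range : ∀ t, ∀ᵐ ω ∂μ, p t ω ∈ Set.Icc (0 : ℝ) 1
  x_binary : ∀ t i, i ∈ Finset.Icc 1 lam → ∀ᵐ ω ∂μ, x t i ω = 0 ∨ x t i ω = 1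
  cond_iid : ∀ t, ∀ S : Finset ℕ, S ⊆ Finset.Icc 1 lam →
    μ[fun ω => ∏ i ∈ S, x t i ω | F t] =ᵐ[μ] fun ω => p t ω ^ S.card
  update : ∀ t, ∀ᵐ ω ∂μ,
    p (t + 1) ω = γ 0 * p t ω + ∑ i ∈ Finset.Icc 1 lam, γ i * x t i ω

/-! Write `cᵢ = xᵢ - p_t`. As the weights sum to one, `p_{t+1} = p_t + ∑ γᵢ cᵢ`, and given `ℱ_t`
the `cᵢ` are centred and uncorrelated with variance `p_t (1 - p_t)`. Expanding `p (1 - p)` at time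
`t + 1` shows that `E[p_t (1 - p_t)]` is multiplied by `1 - s` at each step, so it equals
`(1 - s)^t / 4`; finally `min p (1 - p) ≤ 2 p (1 - p)` on `[0, 1]`. -/

open scoped ENNReal

theorem integral_mul_eq_of_condExp_eq {Ω : Type*} {m m₀ : MeasurableSpace Ω} {μ : Measure Ω}
    (hm : m ≤ m₀) [SigmaFinite (μ.trim hm)] {f g h : Ω → ℝ} (hg : StronglyMeasurable[m] g)
    (hgf : Integrable (g * f) μ) (hf : Integrable f μ) (hfh : μ[f | m] =ᵐ[μ] h) :
    ∫ ω, g ω * f ω ∂μ = ∫ ω, g ω * h ω ∂μ := calc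
  ∫ ω, g ω * f ω ∂μ = ∫ ω, (μ[g * f | m]) ω ∂μ := (integral_condExp hm).symm
  _ = ∫ ω, g ω * h ω ∂μ := integral_congr_ae <|
    (condExp_mul_of_stronglyMeasurable_left hg hgf hf).trans (hfh.mono fun ω hω => by simp [hω])

theorem min_le_two_mul_mul_one_sub {a : ℝ} (h₀ : 0 ≤ a) (h₁ : a ≤ 1) :
    min a (1 - a) ≤ 2 * (a * (1 - a)) := by
  rcases le_total a (1 - a) with h | h
  · rw [min_eq_left h]; nlinarith
  · rw [min_eq_right h]; nlinarith

theorem sum_Icc_one_eq_one_sub {lam : ℕ} {γ : ℕ → ℝ} (hsum : ∑ i ∈ range (lam + 1), γ i = 1) :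
    ∑ i ∈ Icc 1 lam, γ i = 1 - γ 0 := by
  rw [range_eq_Ico, sum_eq_sum_Ico_succ_bot (by omega), Ico_add_one_right_eq_Icc] at hsum
  linarith

namespace NeutralBitEDA

variable {Ω : Type*} [MeasurableSpace Ω] {μ : Measure Ω}
  {lam : ℕ} {γ : ℕ → ℝ} (E : NeutralBitEDA μ lam γ) {t i j : ℕ}

theorem stronglyMeasurable_p (t : ℕ) : StronglyMeasurable[E.F t] (E.p t) :=
  (E.adapted t).stronglyMeasurable

theorem memLp_p [IsFiniteMeasure μ] (t : ℕ) : MemLp (E.p t) ∞ μ := by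
  refine memLp_top_of_bound ((E.stronglyMeasurable_p t).mono (E.F.le t)).aestronglyMeasurable 1 ?_
  filter_upwards [E.p_range t] with ω ⟨h₀, h₁⟩
  rw [Real.norm_eq_abs, abs_le]
  constructor <;> linarith

theorem memLp_x [IsFiniteMeasure μ] (hi : i ∈ Icc 1 lam) : MemLp (E.x t i) ∞ μ := by
  refine memLp_top_of_bound ((E.meas_x t i hi).mono (E.F.le (t + 1))).aestronglyMeasurable 1 ?_
  filter_upwards [E.x_binary t i hi] with ω h
  rcases h with h | h <;> simp [h]

theorem x_mul_self (hi : i ∈ Icc 1 lam) : ∀ᵐ ω ∂μ, E.x t i ω * E.x t i ω = E.x t i ω := by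
  filter_upwards [E.x_binary t i hi] with ω h
  rcases h with h | h <;> simp [h]

theorem condExp_x (hi : i ∈ Icc 1 lam) : μ[E.x t i | E.F t] =ᵐ[μ] E.p t := by
  simpa using E.cond_iid t {i} (singleton_subset_iff.2 hi)

theorem condExp_x_mul_x (hi : i ∈ Icc 1 lam) (hj : j ∈ Icc 1 lam) (hij : i ≠ j) :
    μ[fun ω => E.x t i ω * E.x t j ω | E.F t] =ᵐ[μ] fun ω => E.p t ω * E.p t ω := by
  have h := E.cond_iid t {i, j} (insert_subset hi (singleton_subset_iff.2 hj))
  simpa [prod_pair hij, card_pair hij, sq] using h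

theorem integral_mul_x_sub_p [IsFiniteMeasure μ] {g : Ω → ℝ} (hg : StronglyMeasurable[E.F t] g)
    (hgb : MemLp g ∞ μ) (hi : i ∈ Icc 1 lam) : ∫ ω, g ω * (E.x t i ω - E.p t ω) ∂μ = 0 := by
  simp_rw [mul_sub]
  rw [integral_sub (((E.memLp_x hi).mul' hgb).integrable le_top)
      (((E.memLp_p t).mul' hgb).integrable le_top),
    integral_mul_eq_of_condExp_eq (E.F.le t) hg (((E.memLp_x hi).mul hgb).integrable le_top)
      ((E.memLp_x hi).integrable le_top) (E.condExp_x hi), sub_self]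

theorem integral_one_sub_two_mul_p_mul_x_sub_p [IsFiniteMeasure μ] (hi : i ∈ Icc 1 lam) :
    ∫ ω, (1 - 2 * E.p t ω) * (E.x t i ω - E.p t ω) ∂μ = 0 :=
  E.integral_mul_x_sub_p (g := fun ω => 1 - 2 * E.p t ω)
    (stronglyMeasurable_const.sub ((E.stronglyMeasurable_p t).const_mul 2))
    ((memLp_const 1).sub ((E.memLp_p t).const_mul 2)) hi

theorem integrable_p_mul_one_sub_p [IsFiniteMeasure μ] (t : ℕ) :
    Integrable (fun ω => E.p t ω * (1 - E.p t ω)) μ :=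
  ((((memLp_const 1).sub (E.memLp_p t)).mul' (E.memLp_p t)).integrable le_top)

theorem integral_x_sub_p_mul_x_sub_p [IsFiniteMeasure μ] (hi : i ∈ Icc 1 lam)
    (hj : j ∈ Icc 1 lam) :
    ∫ ω, (E.x t i ω - E.p t ω) * (E.x t j ω - E.p t ω) ∂μ
      = if i = j then ∫ ω, E.p t ω * (1 - E.p t ω) ∂μ else 0 := by
  have hp := E.memLp_p t
  split_ifs with hij
  · subst hij
    have hsq : ∀ᵐ ω ∂μ, (E.x t i ω - E.p t ω) * (E.x t i ω - E.p t ω)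
        = (1 - 2 * E.p t ω) * (E.x t i ω - E.p t ω) + E.p t ω * (1 - E.p t ω) := by
      filter_upwards [E.x_mul_self hi] with ω h
      linear_combination h
    have hg : MemLp (fun ω => 1 - 2 * E.p t ω) ∞ μ := (memLp_const 1).sub (hp.const_mul 2)
    have h₁ : Integrable (fun ω => (1 - 2 * E.p t ω) * (E.x t i ω - E.p t ω)) μ :=
      (((E.memLp_x hi).sub hp).mul' hg).integrable le_top
    rw [integral_congr_ae hsq, integral_add h₁ (E.integrable_p_mul_one_sub_p t),
      E.integral_one_sub_two_mul_p_mul_x_sub_p hi, zero_add]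
  · have hsplit : ∀ ω, (E.x t i ω - E.p t ω) * (E.x t j ω - E.p t ω)
        = (E.x t i ω * E.x t j ω - E.p t ω * E.p t ω) - E.p t ω * (E.x t i ω - E.p t ω)
          - E.p t ω * (E.x t j ω - E.p t ω) := fun ω => by ring
    have hxx : Integrable (fun ω => E.x t i ω * E.x t j ω) μ :=
      ((E.memLp_x hj).mul' (E.memLp_x hi)).integrable le_top
    have hpp : Integrable (fun ω => E.p t ω * E.p t ω) μ := (hp.mul' hp).integrable le_top
    have hpxi : Integrable (fun ω => E.p t ω * (E.x t i ω - E.p t ω)) μ :=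
      (((E.memLp_x hi).sub hp).mul' hp).integrable le_top
    have hpxj : Integrable (fun ω => E.p t ω * (E.x t j ω - E.p t ω)) μ :=
      (((E.memLp_x hj).sub hp).mul' hp).integrable le_top
    have hcov : ∫ ω, E.x t i ω * E.x t j ω ∂μ = ∫ ω, E.p t ω * E.p t ω ∂μ := by
      rw [← integral_condExp (E.F.le t), integral_congr_ae (E.condExp_x_mul_x hi hj hij)]
    simp_rw [hsplit]
    rw [integral_sub ((hxx.sub' hpp).sub' hpxi) hpxj, integral_sub (hxx.sub' hpp) hpxi,
      integral_sub hxx hpp, hcov, E.integral_mul_x_sub_p (E.stronglyMeasurable_p t) hp hi,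
      E.integral_mul_x_sub_p (E.stronglyMeasurable_p t) hp hj]
    ring

theorem p_succ_eq_add_sum (hsum : ∑ i ∈ range (lam + 1), γ i = 1) (t : ℕ) :
    ∀ᵐ ω ∂μ, E.p (t + 1) ω = E.p t ω + ∑ i ∈ Icc 1 lam, γ i * (E.x t i ω - E.p t ω) := by
  filter_upwards [E.update t] with ω h
  simp only [h, mul_sub, sum_sub_distrib, ← sum_mul, sum_Icc_one_eq_one_sub hsum]
  ring

theorem p_succ_mul_one_sub_p_succ (hsum : ∑ i ∈ range (lam + 1), γ i = 1) (t : ℕ) :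
    ∀ᵐ ω ∂μ, E.p (t + 1) ω * (1 - E.p (t + 1) ω)
      = E.p t ω * (1 - E.p t ω)
        + ∑ i ∈ Icc 1 lam, γ i * ((1 - 2 * E.p t ω) * (E.x t i ω - E.p t ω))
        - ∑ i ∈ Icc 1 lam, ∑ j ∈ Icc 1 lam,
            γ i * γ j * ((E.x t i ω - E.p t ω) * (E.x t j ω - E.p t ω)) := by
  filter_upwards [E.p_succ_eq_add_sum hsum t] with ω h
  set c : ℕ → ℝ := fun i => E.x t i ω - E.p t ω
  have hlin : ∑ i ∈ Icc 1 lam, γ i * ((1 - 2 * E.p t ω) * c i)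
      = (1 - 2 * E.p t ω) * ∑ i ∈ Icc 1 lam, γ i * c i := by
    rw [mul_sum]
    exact sum_congr rfl fun i _ => by ring
  have hquad : ∑ i ∈ Icc 1 lam, ∑ j ∈ Icc 1 lam, γ i * γ j * (c i * c j)
      = (∑ i ∈ Icc 1 lam, γ i * c i) * ∑ j ∈ Icc 1 lam, γ j * c j := by
    rw [sum_mul_sum]
    exact sum_congr rfl fun i _ => sum_congr rfl fun j _ => by ring
  rw [h, hlin, hquad]
  ring

theorem integral_p_mul_one_sub_p_succ [IsFiniteMeasure μ]
    (hsum : ∑ i ∈ range (lam + 1), γ i = 1) (t : ℕ) :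
    ∫ ω, E.p (t + 1) ω * (1 - E.p (t + 1) ω) ∂μ
      = (1 - ∑ i ∈ Icc 1 lam, γ i ^ 2) * ∫ ω, E.p t ω * (1 - E.p t ω) ∂μ := by
  set c : ℕ → Ω → ℝ := fun i ω => E.x t i ω - E.p t ω
  have hp := E.memLp_p t
  have hg : MemLp (fun ω => 1 - 2 * E.p t ω) ∞ μ := (memLp_const 1).sub (hp.const_mul 2)
  have hc : ∀ i ∈ Icc 1 lam, MemLp (c i) ∞ μ := fun i hi => (E.memLp_x hi).sub hp
  have hV := E.integrable_p_mul_one_sub_p t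
  have hlin : ∀ i ∈ Icc 1 lam, Integrable (fun ω => γ i * ((1 - 2 * E.p t ω) * c i ω)) μ :=
    fun i hi => (((hc i hi).mul' hg).integrable le_top).const_mul _
  have hquad : ∀ i ∈ Icc 1 lam, ∀ j ∈ Icc 1 lam,
      Integrable (fun ω => γ i * γ j * (c i ω * c j ω)) μ :=
    fun i hi j hj => (((hc j hj).mul' (hc i hi)).integrable le_top).const_mul _
  calc ∫ ω, E.p (t + 1) ω * (1 - E.p (t + 1) ω) ∂μ
      = ∫ ω, (E.p t ω * (1 - E.p t ω) + ∑ i ∈ Icc 1 lam, γ i * ((1 - 2 * E.p t ω) * c i ω)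
          - ∑ i ∈ Icc 1 lam, ∑ j ∈ Icc 1 lam, γ i * γ j * (c i ω * c j ω)) ∂μ :=
        integral_congr_ae (E.p_succ_mul_one_sub_p_succ hsum t)
    _ = (∫ ω, E.p t ω * (1 - E.p t ω) ∂μ)
          + ∑ i ∈ Icc 1 lam, γ i * ∫ ω, (1 - 2 * E.p t ω) * c i ω ∂μ
          - ∑ i ∈ Icc 1 lam, ∑ j ∈ Icc 1 lam, γ i * γ j * ∫ ω, c i ω * c j ω ∂μ := by
        have hL := integrable_finsetSum _ hlin
        have hQ := integrable_finsetSum _ fun i hi => integrable_finsetSum _ (hquad i hi)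
        rw [integral_sub _ hQ, integral_add hV hL, integral_finsetSum _ hlin,
          integral_finsetSum _ fun i hi => integrable_finsetSum _ (hquad i hi),
          sum_congr rfl fun i hi => integral_finsetSum _ (hquad i hi)]
        · simp only [integral_const_mul]
        · exact hV.add hL
    _ = (1 - ∑ i ∈ Icc 1 lam, γ i ^ 2) * ∫ ω, E.p t ω * (1 - E.p t ω) ∂μ := by
        have hcov : ∀ i ∈ Icc 1 lam, ∑ j ∈ Icc 1 lam, γ i * γ j * ∫ ω, c i ω * c j ω ∂μ
            = γ i ^ 2 * ∫ ω, E.p t ω * (1 - E.p t ω) ∂μ := fun i hi => by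
          rw [sum_congr rfl fun j hj => by rw [E.integral_x_sub_p_mul_x_sub_p hi hj]]
          simp only [mul_ite, mul_zero, sum_ite_eq, if_pos hi, sq]
        rw [sum_congr rfl fun i hi => by rw [E.integral_one_sub_two_mul_p_mul_x_sub_p hi],
          sum_congr rfl hcov]
        simp only [mul_zero, sum_const_zero, ← sum_mul]
        ring

theorem integral_p_mul_one_sub_p [IsProbabilityMeasure μ]
    (hsum : ∑ i ∈ range (lam + 1), γ i = 1) (t : ℕ) :
    ∫ ω, E.p t ω * (1 - E.p t ω) ∂μ = 1 / 4 * (1 - ∑ i ∈ Icc 1 lam, γ i ^ 2) ^ t := by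
  induction t with
  | zero =>
    rw [integral_congr_ae (E.p_zero.mono fun ω h => by rw [h]), integral_const, probReal_univ]
    norm_num
  | succ t ih => rw [E.integral_p_mul_one_sub_p_succ hsum, ih]; ring

end NeutralBitEDA

theorem neutral_bit_expected_distance_general {Ω : Type*} [MeasurableSpace Ω]
    (μ : Measure Ω) [IsProbabilityMeasure μ]
    (lam : ℕ) (γ : ℕ → ℝ)
    (hsum : ∑ i ∈ Finset.range (lam + 1), γ i = 1)
    (E : NeutralBitEDA μ lam γ) (t : ℕ) :
    ∫ ω, min (E.p t ω) (1 - E.p t ω) ∂μ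
      ≤ (1 / 2) * (1 - ∑ i ∈ Finset.Icc 1 lam, γ i ^ 2) ^ t := by
  calc ∫ ω, min (E.p t ω) (1 - E.p t ω) ∂μ
      ≤ ∫ ω, 2 * (E.p t ω * (1 - E.p t ω)) ∂μ := by
        refine integral_mono_of_nonneg ?_ ((E.integrable_p_mul_one_sub_p t).const_mul 2) ?_
        · filter_upwards [E.p_range t] with ω ⟨h₀, h₁⟩
          exact le_min h₀ (sub_nonneg.2 h₁)
        · filter_upwards [E.p_range t] with ω ⟨h₀, h₁⟩
          exact min_le_two_mul_mul_one_sub h₀ h₁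
    _ = 2 * ∫ ω, E.p t ω * (1 - E.p t ω) ∂μ := integral_const_mul _ _
    _ = 1 / 2 * (1 - ∑ i ∈ Icc 1 lam, γ i ^ 2) ^ t := by
        rw [E.integral_p_mul_one_sub_p hsum t]; ring

/-- For every `t ≥ 0`, `E[min (p t) (1 - p t)] ≤ (1/2) * (1 - s) ^ t`, where
`s = ∑_{i=1}^lam γ i ^ 2`. -/
theorem neutral_bit_expected_distance {Ω : Type*} [MeasurableSpace Ω]
    (μ : Measure Ω) [IsProbabilityMeasure μ]
    (lam : ℕ) (hlam : 1 ≤ lam) (γ : ℕ → ℝ)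
    (hsum : ∑ i ∈ Finset.range (lam + 1), γ i = 1)
    (hnz : ∃ i ∈ Finset.Icc 1 lam, γ i ≠ 0)
    (E : NeutralBitEDA μ lam γ) (t : ℕ) :
    ∫ ω, min (E.p t ω) (1 - E.p t ω) ∂μ
      ≤ (1 / 2) * (1 - ∑ i ∈ Finset.Icc 1 lam, γ i ^ 2) ^ t :=
  neutral_bit_expected_distance_general μ lam γ hsum E t
end

section
/- Let T_L := min{ t ≥ 0 : p_t ≤ 1/3 or p_t ≥ 2/3 } be the first time the neutral-bit frequency leaves the open interval (1/3, 2/3). Then E[T_L] ≤ 3/(2s); in particular E[T_L] = O(1/s). -/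
open MeasureTheory ProbabilityTheory Finset
open scoped ENNReal NNReal

/-!
The Bernoulli variance `V t = p t * (1 - p t)` contracts in conditional expectation. Writing
`p (t + 1) = p t + Y` with `𝔼[Y | F t] = 0` and `𝔼[Y ^ 2 | F t] = s * V t` (the samples are
conditionally independent Bernoulli variables), one gets `𝔼[V (t + 1) | F t] = (1 - s) * V t`;
all conditional identities are used in integrated form, against bounded `F t`-measurable test
functions `g`. On the event `A t` that the frequency has stayed in `(1/3, 2/3)` up to time `t` we
have `V t ≥ 2/9`, so the potential `D t = 𝔼[V t; A t]` drops by at least `(2 s / 9) * P(A t)` per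
generation. Since `0 ≤ D t ≤ 1/4`, this gives `∑ P(A t) ≤ 9 / (8 s)`, and `𝔼[T_L] = ∑ P(A t)`.
-/

theorem MeasureTheory.MemLp.pow_top {Ω : Type*} [MeasurableSpace Ω] {μ : Measure Ω} {f : Ω → ℝ}
    (hf : MemLp f ∞ μ) (n : ℕ) : MemLp (fun ω => f ω ^ n) ∞ μ := by
  induction n with
  | zero => simpa using memLp_top_const (1 : ℝ)
  | succ n ih => simpa only [pow_succ] using hf.mul' ih

theorem sum_range_le_of_succ_add_le {D m : ℕ → ℝ} (hD : ∀ n, 0 ≤ D n)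
    (hstep : ∀ t, D (t + 1) + m t ≤ D t) (n : ℕ) : ∑ t ∈ range n, m t ≤ D 0 :=
  calc ∑ t ∈ range n, m t ≤ ∑ t ∈ range n, (D t - D (t + 1)) :=
        sum_le_sum fun t _ => by linarith [hstep t]
    _ = D 0 - D n := sum_range_sub' D n
    _ ≤ D 0 := by linarith [hD n]

theorem iInf_natCast_le_tsum_indicator (P : ℕ → Prop) :
    ⨅ (u : ℕ) (_ : P u), (u : ℝ≥0∞) ≤ ∑' t, {t | ∀ u ≤ t, ¬ P u}.indicator 1 t := by
  classical
  by_cases hP : ∃ u, P u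
  · have hbefore : ∀ t ∈ range (Nat.find hP), t ∈ {t | ∀ u ≤ t, ¬ P u} :=
      fun t ht u hu => Nat.find_min hP (hu.trans_lt (mem_range.1 ht))
    calc ⨅ (u : ℕ) (_ : P u), (u : ℝ≥0∞) ≤ Nat.find hP := iInf₂_le _ (Nat.find_spec hP)
      _ = ∑ t ∈ range (Nat.find hP), {t | ∀ u ≤ t, ¬ P u}.indicator 1 t := by
        simp [sum_congr rfl fun t ht => Set.indicator_of_mem (hbefore t ht) (1 : ℕ → ℝ≥0∞)]
      _ ≤ _ := ENNReal.sum_le_tsum _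
  · push Not at hP
    have hall : ∀ t, t ∈ {t | ∀ u ≤ t, ¬ P u} := fun t u _ => hP u
    simp [Set.indicator_of_mem (hall _)]

namespace NeutralBitEDA

variable {Ω : Type*} [MeasurableSpace Ω] {μ : Measure Ω} {lam : ℕ} {γ : ℕ → ℝ}
  (E : NeutralBitEDA μ lam γ)

theorem memLp_top_p (t : ℕ) : MemLp (E.p t) ∞ μ := by
  refine memLp_top_of_bound ((E.adapted t).mono (E.F.le t) le_rfl).aestronglyMeasurable 1 ?_
  filter_upwards [E.p_range t] with ω h
  rw [Real.norm_eq_abs, abs_le]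
  constructor <;> linarith [h.1, h.2]

theorem memLp_top_prod_x (t : ℕ) {S : Finset ℕ} (hS : S ⊆ Icc 1 lam) :
    MemLp (fun ω => ∏ i ∈ S, E.x t i ω) ∞ μ := by
  refine memLp_top_of_bound (((stronglyMeasurable_fun_prod S fun i hi =>
    E.meas_x t i (hS hi)).mono (E.F.le (t + 1))).aestronglyMeasurable) 1 ?_
  filter_upwards [(Finset.eventually_all S).2 fun i hi => E.x_binary t i (hS hi)] with ω h
  rw [norm_prod]
  refine prod_le_one (fun _ _ => norm_nonneg _) fun i hi => ?_
  rcases h i hi with h | h <;> simp [h]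

theorem memLp_top_x (t : ℕ) {i : ℕ} (hi : i ∈ Icc 1 lam) : MemLp (E.x t i) ∞ μ := by
  simpa using E.memLp_top_prod_x t (singleton_subset_iff.2 hi)

def noise (t : ℕ) (ω : Ω) : ℝ := ∑ i ∈ Icc 1 lam, γ i * (E.x t i ω - E.p t ω)

theorem memLp_top_noise (t : ℕ) : MemLp (E.noise t) ∞ μ :=
  memLp_finsetSum _ fun i hi => ((E.memLp_top_x t hi).sub (E.memLp_top_p t)).const_mul (γ i)

theorem p_succ_ae_eq_add_noise (hγ : γ 0 + ∑ i ∈ Icc 1 lam, γ i = 1) (t : ℕ) :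
    ∀ᵐ ω ∂μ, E.p (t + 1) ω = E.p t ω + E.noise t ω := by
  filter_upwards [E.update t] with ω h
  rw [h, noise, eq_sub_of_add_eq hγ]
  simp only [mul_sub, sum_sub_distrib, ← sum_mul]
  ring

def survivalSet (t : ℕ) : Set Ω := {ω | ∀ u ≤ t, E.p u ω ∈ Set.Ioo (1 / 3 : ℝ) (2 / 3)}

theorem measurableSet_survivalSet (t : ℕ) : MeasurableSet[E.F t] (E.survivalSet t) := by
  simp only [survivalSet, Set.ofPred_forall]
  exact .iInter fun u => .iInter fun hu =>
    (E.adapted u).mono (E.F.mono hu) le_rfl measurableSet_Ioo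

theorem survivalSet_succ_subset (t : ℕ) : E.survivalSet (t + 1) ⊆ E.survivalSet t :=
  fun _ hω u hu => hω u (hu.trans t.le_succ)

theorem lintegral_le_tsum_measure_survivalSet {T : Ω → ℝ≥0∞}
    (hT : ∀ ω, T ω = ⨅ (u : ℕ) (_ : E.p u ω ≤ 1 / 3 ∨ 2 / 3 ≤ E.p u ω), (u : ℝ≥0∞)) :
    ∫⁻ ω, T ω ∂μ ≤ ∑' t, μ (E.survivalSet t) := by
  have hmeas t : MeasurableSet (E.survivalSet t) := E.F.le t _ (E.measurableSet_survivalSet t)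
  calc ∫⁻ ω, T ω ∂μ ≤ ∫⁻ ω, ∑' t, (E.survivalSet t).indicator 1 ω ∂μ := by
        refine lintegral_mono fun ω => ?_
        rw [hT ω]
        convert iInf_natCast_le_tsum_indicator _ using 3 with t
        simp [Set.indicator_apply, survivalSet]
    _ = ∑' t, μ (E.survivalSet t) := by
        rw [lintegral_tsum fun t => (measurable_one.indicator (hmeas t)).aemeasurable]
        simp_rw [lintegral_indicator_one (hmeas _)]

theorem memLp_top_variance (t : ℕ) : MemLp (fun ω => E.p t ω * (1 - E.p t ω)) ∞ μ :=
  ((memLp_top_const 1).sub (E.memLp_top_p t)).mul' (E.memLp_top_p t)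

theorem variance_nonneg_ae (t : ℕ) : 0 ≤ᵐ[μ] fun ω => E.p t ω * (1 - E.p t ω) := by
  filter_upwards [E.p_range t] with ω h
  exact mul_nonneg h.1 (sub_nonneg.2 h.2)

section

variable [IsFiniteMeasure μ] {t : ℕ} {g : Ω → ℝ}

theorem integrable_variance (t : ℕ) : Integrable (fun ω => E.p t ω * (1 - E.p t ω)) μ :=
  (E.memLp_top_variance t).integrable le_top

theorem integral_mul_prod_x (hg : StronglyMeasurable[E.F t] g) (hg_top : MemLp g ∞ μ)
    {S : Finset ℕ} (hS : S ⊆ Icc 1 lam) :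
    ∫ ω, g ω * ∏ i ∈ S, E.x t i ω ∂μ = ∫ ω, g ω * E.p t ω ^ #S ∂μ := by
  have hprod := E.memLp_top_prod_x t hS
  calc ∫ ω, g ω * ∏ i ∈ S, E.x t i ω ∂μ
      = ∫ ω, μ[g * fun ω => ∏ i ∈ S, E.x t i ω | E.F t] ω ∂μ :=
        (integral_condExp (E.F.le t)).symm
    _ = ∫ ω, g ω * μ[fun ω => ∏ i ∈ S, E.x t i ω | E.F t] ω ∂μ :=
        integral_congr_ae (condExp_mul_of_stronglyMeasurable_left hg
          ((hprod.mul hg_top).integrable le_top) (hprod.integrable le_top))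
    _ = ∫ ω, g ω * E.p t ω ^ #S ∂μ := by
        refine integral_congr_ae ?_
        filter_upwards [E.cond_iid t S hS] with ω h
        rw [h]

theorem integral_mul_x (hg : StronglyMeasurable[E.F t] g) (hg_top : MemLp g ∞ μ)
    {i : ℕ} (hi : i ∈ Icc 1 lam) :
    ∫ ω, g ω * E.x t i ω ∂μ = ∫ ω, g ω * E.p t ω ∂μ := by
  simpa using E.integral_mul_prod_x hg hg_top (singleton_subset_iff.2 hi)

theorem integral_mul_x_mul_x (hg : StronglyMeasurable[E.F t] g) (hg_top : MemLp g ∞ μ)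
    {i j : ℕ} (hi : i ∈ Icc 1 lam) (hj : j ∈ Icc 1 lam) (hij : i ≠ j) :
    ∫ ω, g ω * (E.x t i ω * E.x t j ω) ∂μ = ∫ ω, g ω * E.p t ω ^ 2 ∂μ := by
  have h := E.integral_mul_prod_x hg hg_top (insert_subset hi (singleton_subset_iff.2 hj))
  simpa only [prod_pair hij, card_pair hij] using h

theorem integral_mul_sub_p_sq (hg : StronglyMeasurable[E.F t] g) (hg_top : MemLp g ∞ μ)
    {i : ℕ} (hi : i ∈ Icc 1 lam) :
    ∫ ω, g ω * (E.x t i ω - E.p t ω) ^ 2 ∂μ = ∫ ω, g ω * (E.p t ω * (1 - E.p t ω)) ∂μ := by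
  have hp := E.memLp_top_p t
  have hgp : MemLp (fun ω => g ω * (1 - 2 * E.p t ω)) ∞ μ :=
    ((memLp_top_const 1).sub (hp.const_mul 2)).mul' hg_top
  have hgm : StronglyMeasurable[E.F t] fun ω => g ω * (1 - 2 * E.p t ω) := by
    have := (E.adapted t).stronglyMeasurable
    fun_prop
  -- `x ^ 2 = x` for a Bernoulli sample, so the square is affine in `x`.
  have hbinary : (fun ω => g ω * (E.x t i ω - E.p t ω) ^ 2) =ᵐ[μ]
      fun ω => g ω * (1 - 2 * E.p t ω) * E.x t i ω + g ω * E.p t ω ^ 2 := by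
    filter_upwards [E.x_binary t i hi] with ω h
    rcases h with h | h <;> rw [h] <;> ring
  have hint_sq : Integrable (fun ω => g ω * E.p t ω ^ 2) μ :=
    ((hp.pow_top 2).mul' hg_top).integrable le_top
  rw [integral_congr_ae hbinary,
    integral_add ((E.memLp_top_x t hi).mul' hgp |>.integrable le_top) hint_sq,
    E.integral_mul_x hgm hgp hi, ← integral_add (hp.mul' hgp |>.integrable le_top) hint_sq]
  exact integral_congr_ae (Filter.Eventually.of_forall fun ω => by ring)

theorem integral_mul_sub_p (hg : StronglyMeasurable[E.F t] g) (hg_top : MemLp g ∞ μ)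
    {i : ℕ} (hi : i ∈ Icc 1 lam) : ∫ ω, g ω * (E.x t i ω - E.p t ω) ∂μ = 0 := by
  simp_rw [mul_sub]
  rw [integral_sub ((E.memLp_top_x t hi).mul' hg_top |>.integrable le_top)
      ((E.memLp_top_p t).mul' hg_top |>.integrable le_top), E.integral_mul_x hg hg_top hi, sub_self]

theorem integral_mul_sub_p_mul_sub_p (hg : StronglyMeasurable[E.F t] g)
    (hg_top : MemLp g ∞ μ) {i j : ℕ} (hi : i ∈ Icc 1 lam) (hj : j ∈ Icc 1 lam) :
    ∫ ω, g ω * ((E.x t i ω - E.p t ω) * (E.x t j ω - E.p t ω)) ∂μ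
      = if i = j then ∫ ω, g ω * (E.p t ω * (1 - E.p t ω)) ∂μ else 0 := by
  split_ifs with hij
  · subst hij
    simpa only [sq] using E.integral_mul_sub_p_sq hg hg_top hi
  have hp := E.memLp_top_p t
  have hxi := E.memLp_top_x t hi
  have hxj := E.memLp_top_x t hj
  have hgp : StronglyMeasurable[E.F t] fun ω => g ω * E.p t ω :=
    hg.mul (E.adapted t).stronglyMeasurable
  have hgp_top : MemLp (fun ω => g ω * E.p t ω) ∞ μ := hp.mul' hg_top
  have hsplit : (fun ω => g ω * ((E.x t i ω - E.p t ω) * (E.x t j ω - E.p t ω))) =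
      fun ω => g ω * (E.x t i ω * E.x t j ω - E.p t ω ^ 2)
        - g ω * E.p t ω * (E.x t i ω - E.p t ω) - g ω * E.p t ω * (E.x t j ω - E.p t ω) := by
    ext ω; ring
  have hpair : ∫ ω, g ω * (E.x t i ω * E.x t j ω - E.p t ω ^ 2) ∂μ = 0 := by
    simp_rw [mul_sub]
    rw [integral_sub ((hxj.mul' hxi (r := ∞)).mul' hg_top |>.integrable le_top)
        ((hp.pow_top 2).mul' hg_top |>.integrable le_top),
      E.integral_mul_x_mul_x hg hg_top hi hj hij, sub_self]
  have hint_pair : Integrable (fun ω => g ω * (E.x t i ω * E.x t j ω - E.p t ω ^ 2)) μ :=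
    (((hxj.mul' hxi).sub (hp.pow_top 2)).mul' hg_top).integrable le_top
  have hint_i : Integrable (fun ω => g ω * E.p t ω * (E.x t i ω - E.p t ω)) μ :=
    ((hxi.sub hp).mul' hgp_top).integrable le_top
  have hint_j : Integrable (fun ω => g ω * E.p t ω * (E.x t j ω - E.p t ω)) μ :=
    ((hxj.sub hp).mul' hgp_top).integrable le_top
  rw [hsplit, integral_sub ?_ hint_j, integral_sub hint_pair hint_i, hpair,
    E.integral_mul_sub_p hgp hgp_top hi, E.integral_mul_sub_p hgp hgp_top hj, sub_zero, sub_zero]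
  exact hint_pair.sub hint_i

theorem integral_mul_noise (hg : StronglyMeasurable[E.F t] g) (hg_top : MemLp g ∞ μ) :
    ∫ ω, g ω * E.noise t ω ∂μ = 0 := by
  have hterm : ∀ i ∈ Icc 1 lam,
      Integrable (fun ω => γ i * (g ω * (E.x t i ω - E.p t ω))) μ := fun i hi =>
    ((((E.memLp_top_x t hi).sub (E.memLp_top_p t)).mul' hg_top).integrable le_top).const_mul _
  simp_rw [noise, mul_sum, mul_left_comm (g _)]
  rw [integral_finsetSum _ hterm]
  refine sum_eq_zero fun i hi => ?_
  rw [integral_const_mul, E.integral_mul_sub_p hg hg_top hi, mul_zero]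

theorem integral_mul_noise_sq (hg : StronglyMeasurable[E.F t] g) (hg_top : MemLp g ∞ μ) :
    ∫ ω, g ω * E.noise t ω ^ 2 ∂μ
      = (∑ i ∈ Icc 1 lam, γ i ^ 2) * ∫ ω, g ω * (E.p t ω * (1 - E.p t ω)) ∂μ := by
  have hexpand : (fun ω => g ω * E.noise t ω ^ 2) = fun ω => ∑ i ∈ Icc 1 lam, ∑ j ∈ Icc 1 lam,
      γ i * γ j * (g ω * ((E.x t i ω - E.p t ω) * (E.x t j ω - E.p t ω))) := by
    ext ω
    rw [noise, sq, sum_mul_sum, mul_sum]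
    refine sum_congr rfl fun i _ => ?_
    rw [mul_sum]
    exact sum_congr rfl fun j _ => by ring
  have hterm : ∀ i ∈ Icc 1 lam, ∀ j ∈ Icc 1 lam, Integrable (fun ω =>
      γ i * γ j * (g ω * ((E.x t i ω - E.p t ω) * (E.x t j ω - E.p t ω)))) μ :=
    fun i hi j hj => (((((E.memLp_top_x t hj).sub (E.memLp_top_p t)).mul'
      ((E.memLp_top_x t hi).sub (E.memLp_top_p t)) (r := ∞)).mul' hg_top).integrable
        le_top).const_mul _
  rw [hexpand, integral_finsetSum _ fun i hi => integrable_finsetSum _ (hterm i hi), sum_mul]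
  refine sum_congr rfl fun i hi => ?_
  rw [integral_finsetSum _ (hterm i hi), sum_congr rfl fun j hj => by
    rw [integral_const_mul, E.integral_mul_sub_p_mul_sub_p hg hg_top hi hj]]
  simp only [mul_ite, mul_zero, sum_ite_eq, if_pos hi]
  ring

theorem integral_mul_variance_succ (hγ : γ 0 + ∑ i ∈ Icc 1 lam, γ i = 1)
    (hg : StronglyMeasurable[E.F t] g) (hg_top : MemLp g ∞ μ) :
    ∫ ω, g ω * (E.p (t + 1) ω * (1 - E.p (t + 1) ω)) ∂μ
      = (1 - ∑ i ∈ Icc 1 lam, γ i ^ 2) * ∫ ω, g ω * (E.p t ω * (1 - E.p t ω)) ∂μ := by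
  have hp := E.memLp_top_p t
  have hY := E.memLp_top_noise t
  have hgq : StronglyMeasurable[E.F t] fun ω => g ω * (1 - 2 * E.p t ω) := by
    have := (E.adapted t).stronglyMeasurable
    fun_prop
  have hgq_top : MemLp (fun ω => g ω * (1 - 2 * E.p t ω)) ∞ μ :=
    ((memLp_top_const 1).sub (hp.const_mul 2)).mul' hg_top
  have hexpand : (fun ω => g ω * (E.p (t + 1) ω * (1 - E.p (t + 1) ω))) =ᵐ[μ]
      fun ω => g ω * (E.p t ω * (1 - E.p t ω)) + g ω * (1 - 2 * E.p t ω) * E.noise t ω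
        - g ω * E.noise t ω ^ 2 := by
    filter_upwards [E.p_succ_ae_eq_add_noise hγ t] with ω h
    rw [h]
    ring
  have hint_var : Integrable (fun ω => g ω * (E.p t ω * (1 - E.p t ω))) μ :=
    ((E.memLp_top_variance t).mul' hg_top).integrable le_top
  have hint_noise : Integrable (fun ω => g ω * (1 - 2 * E.p t ω) * E.noise t ω) μ :=
    (hY.mul' hgq_top).integrable le_top
  have hint_sq : Integrable (fun ω => g ω * E.noise t ω ^ 2) μ :=
    ((hY.pow_top 2).mul' hg_top).integrable le_top
  rw [integral_congr_ae hexpand, integral_sub ?_ hint_sq, integral_add hint_var hint_noise,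
    E.integral_mul_noise hgq hgq_top, E.integral_mul_noise_sq hg hg_top]
  · ring
  · exact hint_var.add hint_noise

theorem setIntegral_variance_succ (hγ : γ 0 + ∑ i ∈ Icc 1 lam, γ i = 1) {A : Set Ω}
    (hA : MeasurableSet[E.F t] A) :
    ∫ ω in A, E.p (t + 1) ω * (1 - E.p (t + 1) ω) ∂μ
      = (1 - ∑ i ∈ Icc 1 lam, γ i ^ 2) * ∫ ω in A, E.p t ω * (1 - E.p t ω) ∂μ := by
  have hind (f : Ω → ℝ) : ∫ ω, A.indicator 1 ω * f ω ∂μ = ∫ ω in A, f ω ∂μ := by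
    rw [← integral_indicator (E.F.le t _ hA)]
    congr 1 with ω
    by_cases hω : ω ∈ A <;> simp [hω]
  simpa only [hind] using E.integral_mul_variance_succ hγ (stronglyMeasurable_one.indicator hA)
    ((memLp_top_const 1).indicator (E.F.le t _ hA))

theorem measureReal_survivalSet_le (t : ℕ) :
    2 / 9 * μ.real (E.survivalSet t) ≤ ∫ ω in E.survivalSet t, E.p t ω * (1 - E.p t ω) ∂μ := by
  rw [mul_comm, ← smul_eq_mul, ← setIntegral_const]
  refine setIntegral_mono_on integrableOn_const (E.integrable_variance t).integrableOn
    (E.F.le t _ (E.measurableSet_survivalSet t)) fun ω hω => ?_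
  obtain ⟨h₁, h₂⟩ := hω t le_rfl
  nlinarith

theorem setIntegral_variance_survivalSet_succ_add_le (hγ : γ 0 + ∑ i ∈ Icc 1 lam, γ i = 1)
    (t : ℕ) :
    ∫ ω in E.survivalSet (t + 1), E.p (t + 1) ω * (1 - E.p (t + 1) ω) ∂μ
        + 2 / 9 * (∑ i ∈ Icc 1 lam, γ i ^ 2) * μ.real (E.survivalSet t)
      ≤ ∫ ω in E.survivalSet t, E.p t ω * (1 - E.p t ω) ∂μ := by
  have hshrink : ∫ ω in E.survivalSet (t + 1), E.p (t + 1) ω * (1 - E.p (t + 1) ω) ∂μ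
      ≤ ∫ ω in E.survivalSet t, E.p (t + 1) ω * (1 - E.p (t + 1) ω) ∂μ :=
    setIntegral_mono_set (E.integrable_variance (t + 1)).integrableOn
      (ae_restrict_of_ae (E.variance_nonneg_ae (t + 1)))
      (E.survivalSet_succ_subset t).eventuallyLE
  have hdrift := E.setIntegral_variance_succ hγ (E.measurableSet_survivalSet t)
  have hs : 0 ≤ ∑ i ∈ Icc 1 lam, γ i ^ 2 := sum_nonneg fun i _ => sq_nonneg (γ i)
  nlinarith [mul_le_mul_of_nonneg_left (E.measureReal_survivalSet_le t) hs]

end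

variable [IsProbabilityMeasure μ]

theorem sum_measureReal_survivalSet_le (hγ : γ 0 + ∑ i ∈ Icc 1 lam, γ i = 1) (n : ℕ) :
    2 / 9 * (∑ i ∈ Icc 1 lam, γ i ^ 2) * ∑ t ∈ range n, μ.real (E.survivalSet t) ≤ 1 / 4 := by
  have hmeas := E.F.le 0 _ (E.measurableSet_survivalSet 0)
  rw [mul_sum]
  calc _ ≤ ∫ ω in E.survivalSet 0, E.p 0 ω * (1 - E.p 0 ω) ∂μ :=
        sum_range_le_of_succ_add_le
          (fun t => integral_nonneg_of_ae (ae_restrict_of_ae (E.variance_nonneg_ae t)))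
          (E.setIntegral_variance_survivalSet_succ_add_le hγ) n
    _ ≤ ∫ ω in E.survivalSet 0, (1 / 4 : ℝ) ∂μ :=
        setIntegral_mono_on (E.integrable_variance 0).integrableOn integrableOn_const hmeas
          fun ω _ => by nlinarith [sq_nonneg (E.p 0 ω - 1 / 2)]
    _ ≤ 1 / 4 := by
        rw [setIntegral_const, smul_eq_mul]
        exact mul_le_of_le_one_left (by norm_num) measureReal_le_one

theorem tsum_measure_survivalSet_le (hγ : γ 0 + ∑ i ∈ Icc 1 lam, γ i = 1)
    (hs : 0 < ∑ i ∈ Icc 1 lam, γ i ^ 2) :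
    ∑' t, μ (E.survivalSet t) ≤ ENNReal.ofReal (9 / (8 * ∑ i ∈ Icc 1 lam, γ i ^ 2)) := by
  refine ENNReal.tsum_le_of_sum_range_le fun n => ?_
  have hsum := E.sum_measureReal_survivalSet_le hγ n
  calc ∑ t ∈ range n, μ (E.survivalSet t)
      = ENNReal.ofReal (∑ t ∈ range n, μ.real (E.survivalSet t)) := by
        rw [ENNReal.ofReal_sum_of_nonneg fun _ _ => measureReal_nonneg]
        exact sum_congr rfl fun t _ => (ofReal_measureReal (measure_ne_top μ _)).symm
    _ ≤ _ := by
        refine ENNReal.ofReal_le_ofReal ?_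
        rw [le_div_iff₀ (by positivity)]
        linarith

end NeutralBitEDA

theorem neutral_bit_leaving_time_expectation_general {Ω : Type*} [MeasurableSpace Ω]
    (μ : Measure Ω) [IsProbabilityMeasure μ]
    (lam : ℕ) (γ : ℕ → ℝ)
    (hsum : ∑ i ∈ Finset.range (lam + 1), γ i = 1)
    (hnz : ∃ i ∈ Finset.Icc 1 lam, γ i ≠ 0)
    (E : NeutralBitEDA μ lam γ)
    (TL : Ω → ℝ≥0∞)
    (hTL : ∀ ω, TL ω =
      ⨅ (u : ℕ) (_ : E.p u ω ≤ 1 / 3 ∨ 2 / 3 ≤ E.p u ω), (u : ℝ≥0∞)) :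
    ∫⁻ ω, TL ω ∂μ
      ≤ ENNReal.ofReal (3 / (2 * ∑ i ∈ Finset.Icc 1 lam, γ i ^ 2)) := by
  obtain ⟨i, hi, hγi⟩ := hnz
  have hs : 0 < ∑ i ∈ Icc 1 lam, γ i ^ 2 :=
    sum_pos' (fun i _ => sq_nonneg (γ i)) ⟨i, hi, by positivity⟩
  have hγ : γ 0 + ∑ i ∈ Icc 1 lam, γ i = 1 := by
    rwa [range_eq_Ico, sum_eq_sum_Ico_succ_bot lam.succ_pos, zero_add,
      Nat.succ_eq_add_one, Ico_add_one_right_eq_Icc] at hsum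
  calc ∫⁻ ω, TL ω ∂μ ≤ ∑' t, μ (E.survivalSet t) := E.lintegral_le_tsum_measure_survivalSet hTL
    _ ≤ ENNReal.ofReal (9 / (8 * ∑ i ∈ Icc 1 lam, γ i ^ 2)) := E.tsum_measure_survivalSet_le hγ hs
    _ ≤ ENNReal.ofReal (3 / (2 * ∑ i ∈ Icc 1 lam, γ i ^ 2)) := by
        gcongr ENNReal.ofReal ?_
        rw [div_le_div_iff₀ (by positivity) (by positivity)]
        linarith

/-- Let `T_L` be the first time the neutral-bit frequency leaves the open
interval `(1/3, 2/3)` (with value `⊤` if it never does).  Then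
`E[T_L] ≤ 3 / (2 s)`, where `s = ∑_{i=1}^lam γ i ^ 2`; in particular
`E[T_L] = O(1/s)`. -/
theorem neutral_bit_leaving_time_expectation {Ω : Type*} [MeasurableSpace Ω]
    (μ : Measure Ω) [IsProbabilityMeasure μ]
    (lam : ℕ) (hlam : 1 ≤ lam) (γ : ℕ → ℝ)
    (hsum : ∑ i ∈ Finset.range (lam + 1), γ i = 1)
    (hnz : ∃ i ∈ Finset.Icc 1 lam, γ i ≠ 0)
    (E : NeutralBitEDA μ lam γ)
    (TL : Ω → ℝ≥0∞)
    (hTL : ∀ ω, TL ω =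
      ⨅ (u : ℕ) (_ : E.p u ω ≤ 1 / 3 ∨ 2 / 3 ≤ E.p u ω), (u : ℝ≥0∞)) :
    ∫⁻ ω, TL ω ∂μ
      ≤ ENNReal.ofReal (3 / (2 * ∑ i ∈ Finset.Icc 1 lam, γ i ^ 2)) :=
  neutral_bit_leaving_time_expectation_general μ lam γ hsum hnz E TL hTL
end
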